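/- arXiv:1305.0944 — 2 statements merged into one kernel-verified Lean document; each statement's English description precedes it below -/
import Mathlib

section
/- Let k be a field, A and B unital associative k-algebras, and ξ : A ⊗ B → B ⊗ A a linear map with ξ(1_A ⊗ b) = b ⊗ 1_A, ξ(a ⊗ 1_B) = 1_B ⊗ a, ξ∘(μ_A ⊗ id_B) = (id_B ⊗ μ_A)∘(ξ ⊗ id_A)∘(id_A ⊗ ξ) and ξ∘(id_A ⊗ μ_B) = (μ_B ⊗ id_A)∘(id_B ⊗ ξ)∘(ξ ⊗ id_B), so that the twisted tensor product B ⊗_ξ A is a unital associative algebra. Let M be a k-vector space with linear maps ρ_A : M ⊗ A → M and ρ_B : M ⊗ B → M that are unital associative right actions of A and of B respectively. Then the linear map ρ : M ⊗ (B ⊗ A) → M defined by ρ(m ⊗ b ⊗ a) = ρ_A(ρ_B(m ⊗ b) ⊗ a) is a unital associative right action of the algebra B ⊗_ξ A on M if and only if the compatibility condition ρ_B∘(ρ_A ⊗ id_B) = ρ_A∘(ρ_B ⊗ id_A)∘(id_M ⊗ ξ) holds as maps M ⊗ A ⊗ B → M. -/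
open TensorProduct

variable (k : Type*) [Field k]

/-- The multiplication of the twisted (braided) tensor product `Q ⊗_ξ P`. -/
noncomputable def twistMul {P Q : Type*} [AddCommGroup P] [Module k P]
    [AddCommGroup Q] [Module k Q]
    (μQ : Q ⊗[k] Q →ₗ[k] Q) (μP : P ⊗[k] P →ₗ[k] P)
    (ξ : P ⊗[k] Q →ₗ[k] Q ⊗[k] P) :
    (Q ⊗[k] P) ⊗[k] (Q ⊗[k] P) →ₗ[k] Q ⊗[k] P :=
  (μQ.rTensor P)
    ∘ₗ (TensorProduct.assoc k Q Q P).symm.toLinearMap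
    ∘ₗ (LinearMap.lTensor Q
          ((μP.lTensor Q)
            ∘ₗ (TensorProduct.assoc k Q P P).toLinearMap
            ∘ₗ (ξ.rTensor P)
            ∘ₗ (TensorProduct.assoc k P Q P).symm.toLinearMap))
    ∘ₗ (TensorProduct.assoc k Q P (Q ⊗[k] P)).toLinearMap

/-- Naturality of `ξ : P ⊗ Q → Q ⊗ P` with respect to a multiplication `μP` on `P`. -/
def NatFirst {P Q : Type*} [AddCommGroup P] [Module k P] [AddCommGroup Q] [Module k Q]
    (μP : P ⊗[k] P →ₗ[k] P) (ξ : P ⊗[k] Q →ₗ[k] Q ⊗[k] P) : Prop :=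
  ξ ∘ₗ (μP.rTensor Q) ∘ₗ (TensorProduct.assoc k P P Q).symm.toLinearMap
    = (μP.lTensor Q)
      ∘ₗ (TensorProduct.assoc k Q P P).toLinearMap
      ∘ₗ (ξ.rTensor P)
      ∘ₗ (TensorProduct.assoc k P Q P).symm.toLinearMap
      ∘ₗ (ξ.lTensor P)

/-- Naturality of `ξ : P ⊗ Q → Q ⊗ P` with respect to a multiplication `μQ` on `Q`. -/
def NatSecond {P Q : Type*} [AddCommGroup P] [Module k P] [AddCommGroup Q] [Module k Q]
    (μQ : Q ⊗[k] Q →ₗ[k] Q) (ξ : P ⊗[k] Q →ₗ[k] Q ⊗[k] P) : Prop :=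
  ξ ∘ₗ (μQ.lTensor P)
    = (μQ.rTensor P)
      ∘ₗ (TensorProduct.assoc k Q Q P).symm.toLinearMap
      ∘ₗ (ξ.lTensor Q)
      ∘ₗ (TensorProduct.assoc k Q P Q).toLinearMap
      ∘ₗ (ξ.rTensor Q)
      ∘ₗ (TensorProduct.assoc k P Q Q).symm.toLinearMap

/-!
Evaluating associativity of the combined action on `m ⊗ (1 ⊗ a) ⊗ (b ⊗ 1)`, whose product in
`B ⊗_ξ A` is `ξ (a ⊗ b)`, yields the compatibility condition. Conversely, compatibility moves
the middle factors `a ⊗ b'` of `ρ_A (ρ_B (ρ_A (ρ_B (m ⊗ b) ⊗ a) ⊗ b') ⊗ a')` across each other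
through `ξ`, after which associativity of `ρ_B` and `ρ_A` absorbs `b` on the left and `a'` on
the right, which is exactly the product `(b ⊗ a)(b' ⊗ a')` in `B ⊗_ξ A`.
-/

section Actions

variable {R M P A B : Type*} [CommSemiring R] [AddCommMonoid M] [Module R M]
  [AddCommMonoid P] [Module R P]

def IsAssocAction (μ : P ⊗[R] P →ₗ[R] P) (ρ : M ⊗[R] P →ₗ[R] M) : Prop :=
  ρ ∘ₗ ρ.rTensor P ∘ₗ (TensorProduct.assoc R M P P).symm.toLinearMap = ρ ∘ₗ μ.lTensor M

theorem IsAssocAction.apply_tmul {μ : P ⊗[R] P →ₗ[R] P} {ρ : M ⊗[R] P →ₗ[R] M}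
    (h : IsAssocAction μ ρ) (m : M) (x y : P) :
    ρ (ρ (m ⊗ₜ x) ⊗ₜ y) = ρ (m ⊗ₜ μ (x ⊗ₜ y)) := by
  simpa using LinearMap.congr_fun h (m ⊗ₜ (x ⊗ₜ y))

variable [Semiring A] [Algebra R A] [Semiring B] [Algebra R B]

def tensorAction (ρB : M ⊗[R] B →ₗ[R] M) (ρA : M ⊗[R] A →ₗ[R] M) :
    M ⊗[R] (B ⊗[R] A) →ₗ[R] M :=
  ρA ∘ₗ ρB.rTensor A ∘ₗ (TensorProduct.assoc R M B A).symm.toLinearMap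

@[simp]
theorem tensorAction_tmul (ρB : M ⊗[R] B →ₗ[R] M) (ρA : M ⊗[R] A →ₗ[R] M) (m : M) (b : B)
    (a : A) : tensorAction ρB ρA (m ⊗ₜ (b ⊗ₜ a)) = ρA (ρB (m ⊗ₜ b) ⊗ₜ a) := by
  simp [tensorAction]

def ActionsCompatible (ξ : A ⊗[R] B →ₗ[R] B ⊗[R] A) (ρA : M ⊗[R] A →ₗ[R] M)
    (ρB : M ⊗[R] B →ₗ[R] M) : Prop :=
  ρB ∘ₗ ρA.rTensor B ∘ₗ (TensorProduct.assoc R M A B).symm.toLinearMap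
    = tensorAction ρB ρA ∘ₗ ξ.lTensor M

theorem actionsCompatible_iff {ξ : A ⊗[R] B →ₗ[R] B ⊗[R] A} {ρA : M ⊗[R] A →ₗ[R] M}
    {ρB : M ⊗[R] B →ₗ[R] M} :
    ActionsCompatible ξ ρA ρB ↔
      ∀ (m : M) (a : A) (b : B), ρB (ρA (m ⊗ₜ a) ⊗ₜ b) = tensorAction ρB ρA (m ⊗ₜ ξ (a ⊗ₜ b)) := by
  constructor
  · intro h m a b
    simpa using LinearMap.congr_fun h (m ⊗ₜ (a ⊗ₜ b))
  · intro h
    ext m a b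
    simpa using h m a b

theorem tensorAction_tmul_map_mulLeft_mulRight {ρA : M ⊗[R] A →ₗ[R] M}
    {ρB : M ⊗[R] B →ₗ[R] M} (hA : IsAssocAction (LinearMap.mul' R A) ρA)
    (hB : IsAssocAction (LinearMap.mul' R B) ρB) (m : M) (b : B) (a : A) (t : B ⊗[R] A) :
    tensorAction ρB ρA (m ⊗ₜ map (LinearMap.mulLeft R b) (LinearMap.mulRight R a) t)
      = ρA (tensorAction ρB ρA (ρB (m ⊗ₜ b) ⊗ₜ t) ⊗ₜ a) := by
  induction t using TensorProduct.induction_on with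
  | zero => simp
  | tmul b' a' => simp [hA.apply_tmul, hB.apply_tmul]
  | add x y hx hy => simp only [map_add, tmul_add, add_tmul, hx, hy]

end Actions

section TwistedTensorProduct

variable {k} {A B : Type*} [Ring A] [Algebra k A] [Ring B] [Algebra k B]

theorem twistMul_tmul (ξ : A ⊗[k] B →ₗ[k] B ⊗[k] A) (b : B) (a : A) (b' : B) (a' : A) :
    twistMul k (LinearMap.mul' k B) (LinearMap.mul' k A) ξ ((b ⊗ₜ a) ⊗ₜ (b' ⊗ₜ a'))
      = map (LinearMap.mulLeft k b) (LinearMap.mulRight k a') (ξ (a ⊗ₜ b')) := by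
  have multiply_outer : ∀ t : B ⊗[k] A,
      (LinearMap.mul' k B).rTensor A ((TensorProduct.assoc k B B A).symm
        (b ⊗ₜ (LinearMap.mul' k A).lTensor B (TensorProduct.assoc k B A A (t ⊗ₜ a'))))
        = map (LinearMap.mulLeft k b) (LinearMap.mulRight k a') t := by
    intro t
    induction t using TensorProduct.induction_on with
    | zero => simp
    | tmul b₁ a₁ => simp
    | add x y hx hy => simp only [add_tmul, map_add, tmul_add, hx, hy]
  exact multiply_outer _

theorem twistMul_one_tmul_tmul_one (ξ : A ⊗[k] B →ₗ[k] B ⊗[k] A) (a : A) (b : B) :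
    twistMul k (LinearMap.mul' k B) (LinearMap.mul' k A) ξ ((1 ⊗ₜ a) ⊗ₜ (b ⊗ₜ 1))
      = ξ (a ⊗ₜ b) := by
  rw [twistMul_tmul, LinearMap.mulLeft_one, LinearMap.mulRight_one, map_id, LinearMap.id_apply]

variable {M : Type*} [AddCommMonoid M] [Module k M] {ξ : A ⊗[k] B →ₗ[k] B ⊗[k] A}
  {ρA : M ⊗[k] A →ₗ[k] M} {ρB : M ⊗[k] B →ₗ[k] M}

theorem actionsCompatible_of_isAssocAction (hρA1 : ∀ m : M, ρA (m ⊗ₜ (1 : A)) = m)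
    (hρB1 : ∀ m : M, ρB (m ⊗ₜ (1 : B)) = m)
    (h : IsAssocAction (twistMul k (LinearMap.mul' k B) (LinearMap.mul' k A) ξ)
      (tensorAction ρB ρA)) :
    ActionsCompatible ξ ρA ρB := by
  rw [actionsCompatible_iff]
  intro m a b
  simpa [hρA1, hρB1, twistMul_one_tmul_tmul_one] using h.apply_tmul m (1 ⊗ₜ a) (b ⊗ₜ 1)

theorem isAssocAction_tensorAction (hA : IsAssocAction (LinearMap.mul' k A) ρA)
    (hB : IsAssocAction (LinearMap.mul' k B) ρB) (hc : ActionsCompatible ξ ρA ρB) :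
    IsAssocAction (twistMul k (LinearMap.mul' k B) (LinearMap.mul' k A) ξ)
      (tensorAction ρB ρA) := by
  rw [actionsCompatible_iff] at hc
  have assoc_tmul : ∀ (m : M) (b : B) (a : A) (b' : B) (a' : A),
      tensorAction ρB ρA (tensorAction ρB ρA (m ⊗ₜ (b ⊗ₜ a)) ⊗ₜ (b' ⊗ₜ a'))
        = tensorAction ρB ρA
            (m ⊗ₜ twistMul k (LinearMap.mul' k B) (LinearMap.mul' k A) ξ
              ((b ⊗ₜ a) ⊗ₜ (b' ⊗ₜ a'))) := by
    intro m b a b' a'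
    calc _ = ρA (ρB (ρA (ρB (m ⊗ₜ b) ⊗ₜ a) ⊗ₜ b') ⊗ₜ a') := by simp only [tensorAction_tmul]
      _ = ρA (tensorAction ρB ρA (ρB (m ⊗ₜ b) ⊗ₜ ξ (a ⊗ₜ b')) ⊗ₜ a') := by rw [hc]
      _ = _ := by rw [twistMul_tmul, tensorAction_tmul_map_mulLeft_mulRight hA hB]
  ext m b a b' a'
  exact assoc_tmul m b a b' a'

end TwistedTensorProduct

theorem twisted_tensor_product_module_iff_compatible
    (A B M : Type*) [Ring A] [Algebra k A] [Ring B] [Algebra k B]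
    [AddCommGroup M] [Module k M]
    (ξ : A ⊗[k] B →ₗ[k] B ⊗[k] A)
    (ρA : M ⊗[k] A →ₗ[k] M) (ρB : M ⊗[k] B →ₗ[k] M)
    (hρA1 : ∀ m : M, ρA (m ⊗ₜ[k] (1 : A)) = m)
    (hρAassoc : ρA ∘ₗ (ρA.rTensor A) ∘ₗ (TensorProduct.assoc k M A A).symm.toLinearMap
      = ρA ∘ₗ ((LinearMap.mul' k A).lTensor M))
    (hρB1 : ∀ m : M, ρB (m ⊗ₜ[k] (1 : B)) = m)
    (hρBassoc : ρB ∘ₗ (ρB.rTensor B) ∘ₗ (TensorProduct.assoc k M B B).symm.toLinearMap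
      = ρB ∘ₗ ((LinearMap.mul' k B).lTensor M)) :
    (letI ρ : M ⊗[k] (B ⊗[k] A) →ₗ[k] M :=
        ρA ∘ₗ (ρB.rTensor A) ∘ₗ (TensorProduct.assoc k M B A).symm.toLinearMap;
      (∀ m : M, ρ (m ⊗ₜ[k] ((1 : B) ⊗ₜ[k] (1 : A))) = m)
        ∧ ρ ∘ₗ (ρ.rTensor (B ⊗[k] A))
            ∘ₗ (TensorProduct.assoc k M (B ⊗[k] A) (B ⊗[k] A)).symm.toLinearMap
          = ρ ∘ₗ ((twistMul k (LinearMap.mul' k B) (LinearMap.mul' k A) ξ).lTensor M))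
    ↔ (ρB ∘ₗ (ρA.rTensor B) ∘ₗ (TensorProduct.assoc k M A B).symm.toLinearMap
        = ρA ∘ₗ (ρB.rTensor A) ∘ₗ (TensorProduct.assoc k M B A).symm.toLinearMap
            ∘ₗ (ξ.lTensor M)) := by
  change (_ ∧ IsAssocAction _ (tensorAction ρB ρA)) ↔ ActionsCompatible ξ ρA ρB
  refine ⟨fun h => actionsCompatible_of_isAssocAction hρA1 hρB1 h.2, fun hc => ⟨?_, ?_⟩⟩
  · intro m
    simp [hρA1, hρB1]
  · exact isAssocAction_tensorAction hρAassoc hρBassoc hc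
end

section
/- Let k be a field, H a bialgebra over k with comultiplication Δ(h) = Σ h_{(1)} ⊗ h_{(2)} and counit ε, A a left H-module algebra (with action h ⊲ a satisfying h ⊲ (aa') = Σ (h_{(1)} ⊲ a)(h_{(2)} ⊲ a'), h ⊲ 1_A = ε(h)1_A, plus unitality and associativity of the action) and B a right H-module algebra (with action b ⊳ h satisfying (bb') ⊳ h = Σ (b ⊳ h_{(1)})(b' ⊳ h_{(2)}), 1_B ⊳ h = ε(h)1_B, plus unitality and associativity of the action). Then the bilinear multiplication on A ⊗ H ⊗ B defined by (a ⊗ h ⊗ b)(a' ⊗ h' ⊗ b') := Σ a(h_{(1)} ⊲ a') ⊗ h_{(2)}h'_{(1)} ⊗ (b ⊳ h'_{(2)})b' is associative with two-sided unit 1_A ⊗ 1_H ⊗ 1_B (the two-sided crossed product A # H # B is a unital associative algebra). -/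
/-!
The two-sided crossed product is an iterated twisted tensor product. For algebras `Q`, `P` and a
linear map `ξ : P ⊗ Q → Q ⊗ P`, the product `(q ⊗ p)(q' ⊗ p') = q ξ(p ⊗ q') p'` on `Q ⊗ P` is
associative as soon as `ξ` intertwines the multiplication of `P` and the multiplication of `Q`
(a twisting map), and unital when `ξ` moves units through. Here `H ⊗ B` is twisted by
`b ⊗ h ↦ h₍₁₎ ⊗ (b ⊳ h₍₂₎)` and `A ⊗ (H ⊗ B)` by `(h ⊗ b) ⊗ a ↦ (h₍₁₎ ⊲ a) ⊗ (h₍₂₎ ⊗ b)`; the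
module-algebra axioms, multiplicativity of `Δ` and coassociativity are exactly what make both of
them twisting maps.
-/

open TensorProduct

variable (k : Type*) [Field k]

variable (H : Type*) [Ring H] [Bialgebra k H]
variable (A : Type*) [Ring A] [Algebra k A]
variable (B : Type*) [Ring B] [Algebra k B]

/-- The twisting map `H ⊗ A → A ⊗ H`, `h ⊗ a ↦ Σ (h₍₁₎ ⊲ a) ⊗ h₍₂₎`, associated to a
left action `λ : H ⊗ A → A`. -/
noncomputable def leftTwist (lam : H ⊗[k] A →ₗ[k] A) : H ⊗[k] A →ₗ[k] A ⊗[k] H :=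
  (lam.rTensor H)
    ∘ₗ (TensorProduct.assoc k H A H).symm.toLinearMap
    ∘ₗ (LinearMap.lTensor H (TensorProduct.comm k H A).toLinearMap)
    ∘ₗ (TensorProduct.assoc k H H A).toLinearMap
    ∘ₗ ((Coalgebra.comul (R := k) (A := H)).rTensor A)

/-- The twisting map `B ⊗ H → H ⊗ B`, `b ⊗ h ↦ Σ h₍₁₎ ⊗ (b ⊳ h₍₂₎)`, associated to a
right action `ρ : B ⊗ H → B`. -/
noncomputable def rightTwist (rho : B ⊗[k] H →ₗ[k] B) : B ⊗[k] H →ₗ[k] H ⊗[k] B :=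
  (LinearMap.lTensor H (rho ∘ₗ (TensorProduct.comm k H B).toLinearMap))
    ∘ₗ (TensorProduct.assoc k H H B).toLinearMap
    ∘ₗ (TensorProduct.comm k B (H ⊗[k] H)).toLinearMap
    ∘ₗ (LinearMap.lTensor B (Coalgebra.comul (R := k) (A := H)))

/-- The multiplication `Σ h h'₍₁₎ ⊗ (b ⊳ h'₍₂₎) b'` on `H ⊗ B`. -/
noncomputable def crossedMulHB (rho : B ⊗[k] H →ₗ[k] B) :
    (H ⊗[k] B) ⊗[k] (H ⊗[k] B) →ₗ[k] H ⊗[k] B :=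
  twistMul k (LinearMap.mul' k H) (LinearMap.mul' k B) (rightTwist k H B rho)

/-- The twisting map `(H ⊗ B) ⊗ A → A ⊗ (H ⊗ B)`,
`(h ⊗ b) ⊗ a ↦ Σ (h₍₁₎ ⊲ a) ⊗ (h₍₂₎ ⊗ b)`. -/
noncomputable def bigTwist (lam : H ⊗[k] A →ₗ[k] A) :
    (H ⊗[k] B) ⊗[k] A →ₗ[k] A ⊗[k] (H ⊗[k] B) :=
  (TensorProduct.assoc k A H B).toLinearMap
    ∘ₗ ((leftTwist k H A lam).rTensor B)
    ∘ₗ (TensorProduct.assoc k H A B).symm.toLinearMap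
    ∘ₗ (LinearMap.lTensor H (TensorProduct.comm k B A).toLinearMap)
    ∘ₗ (TensorProduct.assoc k H B A).toLinearMap

/-- The two-sided crossed product multiplication on `A ⊗ H ⊗ B`:
`(a ⊗ h ⊗ b)(a' ⊗ h' ⊗ b') = Σ a (h₍₁₎ ⊲ a') ⊗ h₍₂₎ h'₍₁₎ ⊗ (b ⊳ h'₍₂₎) b'`. -/
noncomputable def twoSidedCrossedMul (lam : H ⊗[k] A →ₗ[k] A) (rho : B ⊗[k] H →ₗ[k] B) :
    (A ⊗[k] (H ⊗[k] B)) ⊗[k] (A ⊗[k] (H ⊗[k] B)) →ₗ[k] A ⊗[k] (H ⊗[k] B) :=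
  twistMul k (LinearMap.mul' k A) (crossedMulHB k H B rho) (bigTwist k H A B lam)

section TensorProductLemmas

variable {R M N X Y : Type*} [CommSemiring R] [AddCommMonoid M] [Module R M]
  [AddCommMonoid N] [Module R N] [AddCommMonoid X] [Module R X] [AddCommMonoid Y] [Module R Y]

theorem LinearMap.rTensor_assoc_symm_tmul (μ : M ⊗[R] N →ₗ[R] X) (m : M) (t : N ⊗[R] Y) :
    μ.rTensor Y ((TensorProduct.assoc R M N Y).symm (m ⊗ₜ t)) = (curry μ m).rTensor Y t := by
  induction t using TensorProduct.induction_on with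
  | zero => simp
  | tmul n y => simp
  | add x y hx hy => simp only [tmul_add, map_add, hx, hy]

theorem LinearMap.lTensor_assoc_tmul (μ : N ⊗[R] Y →ₗ[R] X) (t : M ⊗[R] N) (y : Y) :
    μ.lTensor M (TensorProduct.assoc R M N Y (t ⊗ₜ y)) = ((curry μ).flip y).lTensor M t := by
  induction t using TensorProduct.induction_on with
  | zero => simp
  | tmul m n => simp
  | add x y hx hy => simp only [add_tmul, map_add, hx, hy]

theorem LinearMap.rTensor_lTensor_apply (f : M →ₗ[R] X) (g : N →ₗ[R] Y) (x : M ⊗[R] N) :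
    f.rTensor Y (g.lTensor M x) = g.lTensor X (f.rTensor N x) := by
  rw [← LinearMap.comp_apply, LinearMap.rTensor_comp_lTensor, ← LinearMap.lTensor_comp_rTensor,
    LinearMap.comp_apply]

theorem TensorProduct.curry_apply_eq_comp {μ : M ⊗[R] M →ₗ[R] M}
    (hμ : ∀ x y z, μ (μ (x ⊗ₜ y) ⊗ₜ z) = μ (x ⊗ₜ μ (y ⊗ₜ z))) (x y : M) :
    curry μ (μ (x ⊗ₜ y)) = curry μ x ∘ₗ curry μ y :=
  LinearMap.ext fun z => by simp [hμ]

theorem TensorProduct.flip_curry_apply_eq_comp {μ : M ⊗[R] M →ₗ[R] M}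
    (hμ : ∀ x y z, μ (μ (x ⊗ₜ y) ⊗ₜ z) = μ (x ⊗ₜ μ (y ⊗ₜ z))) (x y : M) :
    (curry μ).flip (μ (x ⊗ₜ y)) = (curry μ).flip y ∘ₗ (curry μ).flip x :=
  LinearMap.ext fun z => by simp [hμ]

theorem LinearMap.mul'_assoc_tmul {S : Type*} [Semiring S] [Algebra R S] (x y z : S) :
    mul' R S (mul' R S (x ⊗ₜ y) ⊗ₜ z) = mul' R S (x ⊗ₜ mul' R S (y ⊗ₜ z)) := by
  simp [mul_assoc]

end TensorProductLemmas

section TwistedTensorProduct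

variable {k}
variable {Q P : Type*} [AddCommGroup Q] [Module k Q] [AddCommGroup P] [Module k P]
  (μQ : Q ⊗[k] Q →ₗ[k] Q) (μP : P ⊗[k] P →ₗ[k] P) (ξ : P ⊗[k] Q →ₗ[k] Q ⊗[k] P)

/-- In the twisted product on `Q ⊗ P`, `twistActLeft μP ξ (p ⊗ w)` is `(1 ⊗ p) w` and
`twistActRight μQ ξ (w ⊗ q)` is `w (q ⊗ 1)`; neither needs units to be defined. -/
noncomputable def twistActLeft : P ⊗[k] (Q ⊗[k] P) →ₗ[k] Q ⊗[k] P :=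
  (μP.lTensor Q) ∘ₗ (TensorProduct.assoc k Q P P).toLinearMap ∘ₗ (ξ.rTensor P)
    ∘ₗ (TensorProduct.assoc k P Q P).symm.toLinearMap

noncomputable def twistActRight : (Q ⊗[k] P) ⊗[k] Q →ₗ[k] Q ⊗[k] P :=
  (μQ.rTensor P) ∘ₗ (TensorProduct.assoc k Q Q P).symm.toLinearMap ∘ₗ (ξ.lTensor Q)
    ∘ₗ (TensorProduct.assoc k Q P Q).toLinearMap

theorem twistActLeft_tmul (p : P) (q : Q) (p' : P) :
    twistActLeft μP ξ (p ⊗ₜ (q ⊗ₜ p')) = ((curry μP).flip p').lTensor Q (ξ (p ⊗ₜ q)) := by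
  simp [twistActLeft, LinearMap.lTensor_assoc_tmul]

theorem twistActRight_tmul (q : Q) (p : P) (q' : Q) :
    twistActRight μQ ξ ((q ⊗ₜ p) ⊗ₜ q') = (curry μQ q).rTensor P (ξ (p ⊗ₜ q')) := by
  simp [twistActRight, LinearMap.rTensor_assoc_symm_tmul]

theorem twistMul_tmul_left (q : Q) (p : P) (w : Q ⊗[k] P) :
    twistMul k μQ μP ξ ((q ⊗ₜ p) ⊗ₜ w)
      = (curry μQ q).rTensor P (twistActLeft μP ξ (p ⊗ₜ w)) := by
  simp [twistMul, twistActLeft, LinearMap.rTensor_assoc_symm_tmul]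

theorem twistMul_tmul_right (w : Q ⊗[k] P) (q : Q) (p : P) :
    twistMul k μQ μP ξ (w ⊗ₜ (q ⊗ₜ p))
      = ((curry μP).flip p).lTensor Q (twistActRight μQ ξ (w ⊗ₜ q)) := by
  induction w using TensorProduct.induction_on with
  | zero => simp
  | tmul q₀ p₀ =>
    rw [twistMul_tmul_left, twistActLeft_tmul, twistActRight_tmul, LinearMap.rTensor_lTensor_apply]
  | add x y hx hy => simp only [add_tmul, map_add, hx, hy]

variable {μQ μP ξ}

theorem twistActRight_rTensor_curry
    (hμQ : ∀ x y z, μQ (μQ (x ⊗ₜ y) ⊗ₜ z) = μQ (x ⊗ₜ μQ (y ⊗ₜ z))) (q : Q) (w : Q ⊗[k] P)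
    (q' : Q) : twistActRight μQ ξ ((curry μQ q).rTensor P w ⊗ₜ q')
      = (curry μQ q).rTensor P (twistActRight μQ ξ (w ⊗ₜ q')) := by
  induction w using TensorProduct.induction_on with
  | zero => simp
  | tmul a c =>
    simp only [LinearMap.rTensor_tmul, twistActRight_tmul, curry_apply,
      curry_apply_eq_comp hμQ, LinearMap.rTensor_comp_apply]
  | add x y hx hy => simp only [map_add, add_tmul, hx, hy]

theorem twistActLeft_lTensor_flip_curry
    (hμP : ∀ x y z, μP (μP (x ⊗ₜ y) ⊗ₜ z) = μP (x ⊗ₜ μP (y ⊗ₜ z))) (p : P) (w : Q ⊗[k] P)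
    (p' : P) : twistActLeft μP ξ (p ⊗ₜ ((curry μP).flip p').lTensor Q w)
      = ((curry μP).flip p').lTensor Q (twistActLeft μP ξ (p ⊗ₜ w)) := by
  induction w using TensorProduct.induction_on with
  | zero => simp
  | tmul a c =>
    simp only [LinearMap.lTensor_tmul, twistActLeft_tmul, LinearMap.flip_apply, curry_apply,
      flip_curry_apply_eq_comp hμP, LinearMap.lTensor_comp_apply]
  | add x y hx hy => simp only [map_add, tmul_add, hx, hy]

theorem twistActRight_lTensor_flip_curry
    (hξP : ∀ p p' q, ξ (μP (p ⊗ₜ p') ⊗ₜ q) = twistActLeft μP ξ (p ⊗ₜ ξ (p' ⊗ₜ q)))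
    (p : P) (w : Q ⊗[k] P) (q : Q) :
    twistActRight μQ ξ (((curry μP).flip p).lTensor Q w ⊗ₜ q)
      = twistMul k μQ μP ξ (w ⊗ₜ ξ (p ⊗ₜ q)) := by
  induction w using TensorProduct.induction_on with
  | zero => simp
  | tmul a c =>
    simp only [LinearMap.lTensor_tmul, LinearMap.flip_apply, curry_apply, twistActRight_tmul,
      hξP, twistMul_tmul_left]
  | add x y hx hy => simp only [map_add, add_tmul, hx, hy]

theorem twistActLeft_rTensor_curry
    (hξQ : ∀ p q q', ξ (p ⊗ₜ μQ (q ⊗ₜ q')) = twistActRight μQ ξ (ξ (p ⊗ₜ q) ⊗ₜ q'))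
    (p : P) (q : Q) (w : Q ⊗[k] P) :
    twistActLeft μP ξ (p ⊗ₜ (curry μQ q).rTensor P w)
      = twistMul k μQ μP ξ (ξ (p ⊗ₜ q) ⊗ₜ w) := by
  induction w using TensorProduct.induction_on with
  | zero => simp
  | tmul a c =>
    simp only [LinearMap.rTensor_tmul, curry_apply, twistActLeft_tmul, hξQ, twistMul_tmul_right]
  | add x y hx hy => simp only [map_add, tmul_add, hx, hy]

theorem twistMul_assoc
    (hμQ : ∀ x y z, μQ (μQ (x ⊗ₜ y) ⊗ₜ z) = μQ (x ⊗ₜ μQ (y ⊗ₜ z)))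
    (hμP : ∀ x y z, μP (μP (x ⊗ₜ y) ⊗ₜ z) = μP (x ⊗ₜ μP (y ⊗ₜ z)))
    (hξP : ∀ p p' q, ξ (μP (p ⊗ₜ p') ⊗ₜ q) = twistActLeft μP ξ (p ⊗ₜ ξ (p' ⊗ₜ q)))
    (hξQ : ∀ p q q', ξ (p ⊗ₜ μQ (q ⊗ₜ q')) = twistActRight μQ ξ (ξ (p ⊗ₜ q) ⊗ₜ q'))
    (x y z : Q ⊗[k] P) :
    twistMul k μQ μP ξ (twistMul k μQ μP ξ (x ⊗ₜ y) ⊗ₜ z)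
      = twistMul k μQ μP ξ (x ⊗ₜ twistMul k μQ μP ξ (y ⊗ₜ z)) := by
  induction x using TensorProduct.induction_on with
  | zero => simp
  | add x x' hx hx' => simp only [map_add, add_tmul, hx, hx']
  | tmul q p =>
    induction z using TensorProduct.induction_on with
    | zero => simp
    | add z z' hz hz' => simp only [map_add, tmul_add, hz, hz']
    | tmul q'' p'' =>
      induction y using TensorProduct.induction_on with
      | zero => simp
      | add y y' hy hy' => simp only [map_add, add_tmul, tmul_add, hy, hy']
      | tmul a c =>
        -- both sides become `(q ⊗ -)(- ⊗ p'')` applied to the product `ξ(p ⊗ a) ξ(c ⊗ q'')`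
        rw [twistMul_tmul_left, twistActLeft_tmul, twistMul_tmul_right,
          twistActRight_rTensor_curry hμQ, twistActRight_lTensor_flip_curry hξP,
          twistMul_tmul_left, twistMul_tmul_left, twistActLeft_tmul,
          LinearMap.rTensor_lTensor_apply (curry μQ a), twistActLeft_lTensor_flip_curry hμP,
          twistActLeft_rTensor_curry hξQ, LinearMap.rTensor_lTensor_apply]

theorem twistMul_one_tmul {eQ : Q} {eP : P} (hQ : ∀ q, μQ (eQ ⊗ₜ q) = q)
    (hP : ∀ p, μP (eP ⊗ₜ p) = p) (hξ : ∀ q, ξ (eP ⊗ₜ q) = q ⊗ₜ eP) (w : Q ⊗[k] P) :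
    twistMul k μQ μP ξ ((eQ ⊗ₜ eP) ⊗ₜ w) = w := by
  induction w using TensorProduct.induction_on with
  | zero => simp
  | tmul q p => simp [twistMul_tmul_left, twistActLeft_tmul, hQ, hP, hξ]
  | add x y hx hy => simp only [map_add, tmul_add, hx, hy]

theorem twistMul_tmul_one {eQ : Q} {eP : P} (hQ : ∀ q, μQ (q ⊗ₜ eQ) = q)
    (hP : ∀ p, μP (p ⊗ₜ eP) = p) (hξ : ∀ p, ξ (p ⊗ₜ eQ) = eQ ⊗ₜ p) (w : Q ⊗[k] P) :
    twistMul k μQ μP ξ (w ⊗ₜ (eQ ⊗ₜ eP)) = w := by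
  induction w using TensorProduct.induction_on with
  | zero => simp
  | tmul q p => simp [twistMul_tmul_right, twistActRight_tmul, hQ, hP, hξ]
  | add x y hx hy => simp only [map_add, add_tmul, hx, hy]

end TwistedTensorProduct

theorem Coalgebra.sum_sum_apply_tmul_tmul_eq {R C X : Type*} [CommSemiring R] [AddCommMonoid C]
    [Module R C] [Coalgebra R C] [AddCommMonoid X] [Module R X] {c : C} {ι : Type*}
    {κ Λ : ι → Type*} (repr : Coalgebra.Repr R c ι)
    (c₁ : (i : ι) → Coalgebra.Repr R (repr.left i) (κ i))
    (c₂ : (i : ι) → Coalgebra.Repr R (repr.right i) (Λ i)) (Φ : C ⊗[R] (C ⊗[R] C) →ₗ[R] X) :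
    ∑ i ∈ repr.index, ∑ j ∈ (c₁ i).index, Φ ((c₁ i).left j ⊗ₜ ((c₁ i).right j ⊗ₜ repr.right i))
      = ∑ i ∈ repr.index, ∑ j ∈ (c₂ i).index,
          Φ (repr.left i ⊗ₜ ((c₂ i).left j ⊗ₜ (c₂ i).right j)) := by
  simpa only [map_sum] using congrArg Φ (Coalgebra.sum_tmul_tmul_eq repr c₁ c₂)

section CrossedProduct

variable {k H A B}
variable {lam : H ⊗[k] A →ₗ[k] A} {rho : B ⊗[k] H →ₗ[k] B} {ι : Type*}

open Coalgebra

theorem rightTwist_tmul_eq_sum (b : B) {h : H} (r : Repr k h ι) :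
    rightTwist k H B rho (b ⊗ₜ h) = ∑ i ∈ r.index, r.left i ⊗ₜ rho (b ⊗ₜ r.right i) := by
  simp [rightTwist, ← r.eq, tmul_sum]

theorem bigTwist_tmul_eq_sum {h : H} (r : Repr k h ι) (b : B) (a : A) :
    bigTwist k H A B lam ((h ⊗ₜ b) ⊗ₜ a)
      = ∑ i ∈ r.index, lam (r.left i ⊗ₜ a) ⊗ₜ (r.right i ⊗ₜ b) := by
  simp [bigTwist, leftTwist, ← r.eq, sum_tmul]

theorem crossedMulHB_tmul_eq_sum (h : H) (b : B) {h' : H} (r : Repr k h' ι) (b' : B) :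
    crossedMulHB k H B rho ((h ⊗ₜ b) ⊗ₜ (h' ⊗ₜ b'))
      = ∑ i ∈ r.index, (h * r.left i) ⊗ₜ (rho (b ⊗ₜ r.right i) * b') := by
  simp [crossedMulHB, twistMul_tmul_left, twistActLeft_tmul, rightTwist_tmul_eq_sum b r]

theorem lam_mul_tmul (hlamassoc : lam ∘ₗ ((LinearMap.mul' k H).rTensor A)
      ∘ₗ (TensorProduct.assoc k H H A).symm.toLinearMap = lam ∘ₗ (lam.lTensor H))
    (g g' : H) (a : A) : lam ((g * g') ⊗ₜ a) = lam (g ⊗ₜ lam (g' ⊗ₜ a)) := by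
  simpa using LinearMap.congr_fun hlamassoc (g ⊗ₜ (g' ⊗ₜ a))

theorem rho_tmul_mul (hrhoassoc : rho ∘ₗ (rho.rTensor H)
      ∘ₗ (TensorProduct.assoc k B H H).symm.toLinearMap = rho ∘ₗ ((LinearMap.mul' k H).lTensor B))
    (b : B) (g g' : H) : rho (b ⊗ₜ (g * g')) = rho (rho (b ⊗ₜ g) ⊗ₜ g') := by
  simpa using (LinearMap.congr_fun hrhoassoc (b ⊗ₜ (g ⊗ₜ g'))).symm

theorem lam_tmul_mul (hlammul : lam ∘ₗ ((LinearMap.mul' k A).lTensor H)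
      = (LinearMap.mul' k A) ∘ₗ (TensorProduct.map lam lam)
        ∘ₗ (TensorProduct.tensorTensorTensorComm k H H A A).toLinearMap
        ∘ₗ ((Coalgebra.comul (R := k) (A := H)).rTensor (A ⊗[k] A)))
    {g : H} (r : Repr k g ι) (a a' : A) :
    lam (g ⊗ₜ (a * a')) = ∑ i ∈ r.index, lam (r.left i ⊗ₜ a) * lam (r.right i ⊗ₜ a') := by
  simpa [← r.eq, sum_tmul] using LinearMap.congr_fun hlammul (g ⊗ₜ (a ⊗ₜ a'))

theorem rho_mul_tmul (hrhomul : rho ∘ₗ ((LinearMap.mul' k B).rTensor H)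
      = (LinearMap.mul' k B) ∘ₗ (TensorProduct.map rho rho)
        ∘ₗ (TensorProduct.tensorTensorTensorComm k B B H H).toLinearMap
        ∘ₗ ((Coalgebra.comul (R := k) (A := H)).lTensor (B ⊗[k] B)))
    (b b' : B) {g : H} (r : Repr k g ι) :
    rho ((b * b') ⊗ₜ g) = ∑ i ∈ r.index, rho (b ⊗ₜ r.left i) * rho (b' ⊗ₜ r.right i) := by
  simpa [← r.eq, tmul_sum] using LinearMap.congr_fun hrhomul ((b ⊗ₜ b') ⊗ₜ g)

theorem rightTwist_mul_tmul (hrhomul : rho ∘ₗ ((LinearMap.mul' k B).rTensor H)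
      = (LinearMap.mul' k B) ∘ₗ (TensorProduct.map rho rho)
        ∘ₗ (TensorProduct.tensorTensorTensorComm k B B H H).toLinearMap
        ∘ₗ ((Coalgebra.comul (R := k) (A := H)).lTensor (B ⊗[k] B)))
    (b b' : B) (h : H) :
    rightTwist k H B rho ((b * b') ⊗ₜ h)
      = twistActLeft (LinearMap.mul' k B) (rightTwist k H B rho)
          (b ⊗ₜ rightTwist k H B rho (b' ⊗ₜ h)) := by
  let r := ℛ k h
  let Φ : H ⊗[k] (H ⊗[k] H) →ₗ[k] H ⊗[k] B :=
    TensorProduct.map .id (LinearMap.mul' k B ∘ₗ TensorProduct.map (curry rho b) (curry rho b'))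
  calc rightTwist k H B rho ((b * b') ⊗ₜ h)
      = ∑ i ∈ r.index, ∑ j ∈ (ℛ k (r.right i)).index,
          Φ (r.left i ⊗ₜ ((ℛ k (r.right i)).left j ⊗ₜ (ℛ k (r.right i)).right j)) := by
        simp [Φ, rightTwist_tmul_eq_sum _ r, rho_mul_tmul hrhomul _ _ (ℛ k _), tmul_sum]
    _ = ∑ i ∈ r.index, ∑ j ∈ (ℛ k (r.left i)).index,
          Φ ((ℛ k (r.left i)).left j ⊗ₜ ((ℛ k (r.left i)).right j ⊗ₜ r.right i)) :=
        (sum_sum_apply_tmul_tmul_eq r _ _ Φ).symm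
    _ = _ := by
        simp [Φ, rightTwist_tmul_eq_sum _ r, tmul_sum, twistActLeft_tmul,
          rightTwist_tmul_eq_sum _ (ℛ k _)]

theorem rightTwist_tmul_mul (hrhoassoc : rho ∘ₗ (rho.rTensor H)
      ∘ₗ (TensorProduct.assoc k B H H).symm.toLinearMap = rho ∘ₗ ((LinearMap.mul' k H).lTensor B))
    (b : B) (h h' : H) :
    rightTwist k H B rho (b ⊗ₜ (h * h'))
      = twistActRight (LinearMap.mul' k H) (rightTwist k H B rho)
          (rightTwist k H B rho (b ⊗ₜ h) ⊗ₜ h') := by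
  simp [rightTwist_tmul_eq_sum _ ((ℛ k h).mul (ℛ k h')), rightTwist_tmul_eq_sum _ (ℛ k h),
    rightTwist_tmul_eq_sum _ (ℛ k h'), twistActRight_tmul, rho_tmul_mul hrhoassoc,
    Finset.sum_product, sum_tmul]

theorem rightTwist_one_tmul
    (hrhoone : ∀ h : H, rho ((1 : B) ⊗ₜ[k] h) = (Coalgebra.counit (R := k) (A := H) h) • (1 : B))
    (h : H) : rightTwist k H B rho (1 ⊗ₜ h) = h ⊗ₜ 1 := by
  have := congrArg ((Algebra.linearMap k B).lTensor H) (sum_tmul_counit_eq (ℛ k h))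
  simp only [map_sum, LinearMap.lTensor_tmul, Algebra.linearMap_apply, map_one,
    Algebra.algebraMap_eq_smul_one] at this
  rw [rightTwist_tmul_eq_sum _ (ℛ k h), ← this]
  simp only [hrhoone]

theorem rightTwist_tmul_one (hrho1 : ∀ b : B, rho (b ⊗ₜ[k] (1 : H)) = b) (b : B) :
    rightTwist k H B rho (b ⊗ₜ 1) = 1 ⊗ₜ b := by
  simp [rightTwist, Bialgebra.comul_one, Algebra.TensorProduct.one_def, hrho1]

theorem bigTwist_crossedMulHB_tmul (hlamassoc : lam ∘ₗ ((LinearMap.mul' k H).rTensor A)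
      ∘ₗ (TensorProduct.assoc k H H A).symm.toLinearMap = lam ∘ₗ (lam.lTensor H))
    (h : H) (b : B) (h' : H) (b' : B) (a : A) :
    bigTwist k H A B lam (crossedMulHB k H B rho ((h ⊗ₜ b) ⊗ₜ (h' ⊗ₜ b')) ⊗ₜ a)
      = twistActLeft (crossedMulHB k H B rho) (bigTwist k H A B lam)
          ((h ⊗ₜ b) ⊗ₜ bigTwist k H A B lam ((h' ⊗ₜ b') ⊗ₜ a)) := by
  let r := ℛ k h
  let r' := ℛ k h'
  let Φ (i : H × H) : H ⊗[k] (H ⊗[k] H) →ₗ[k] A ⊗[k] (H ⊗[k] B) :=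
    TensorProduct.map (curry lam (r.left i) ∘ₗ (curry lam).flip a)
      (TensorProduct.map (LinearMap.mulLeft k (r.right i)) (LinearMap.mulRight k b' ∘ₗ curry rho b))
  -- both sides are `Σ h₍₁₎ ⊲ (h'₍₁₎ ⊲ a) ⊗ h₍₂₎ h'₍₂₎ ⊗ (b ⊳ h'₍₃₎) b'`, with `Δ²h'` bracketed
  -- differently
  calc bigTwist k H A B lam (crossedMulHB k H B rho ((h ⊗ₜ b) ⊗ₜ (h' ⊗ₜ b')) ⊗ₜ a)
      = ∑ i ∈ r.index, ∑ j ∈ r'.index, ∑ l ∈ (ℛ k (r'.left j)).index,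
          Φ i ((ℛ k (r'.left j)).left l ⊗ₜ ((ℛ k (r'.left j)).right l ⊗ₜ r'.right j)) := by
        rw [Finset.sum_comm]
        simp [Φ, crossedMulHB_tmul_eq_sum h b r', sum_tmul, bigTwist_tmul_eq_sum (r.mul (ℛ k _)),
          Finset.sum_product, lam_mul_tmul hlamassoc]
    _ = ∑ i ∈ r.index, ∑ j ∈ r'.index, ∑ n ∈ (ℛ k (r'.right j)).index,
          Φ i (r'.left j ⊗ₜ ((ℛ k (r'.right j)).left n ⊗ₜ (ℛ k (r'.right j)).right n)) :=
        Finset.sum_congr rfl fun i _ => sum_sum_apply_tmul_tmul_eq r' _ _ (Φ i)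
    _ = _ := by
        rw [Finset.sum_comm]
        simp [Φ, bigTwist_tmul_eq_sum r', tmul_sum, twistActLeft_tmul, bigTwist_tmul_eq_sum r,
          crossedMulHB_tmul_eq_sum _ b (ℛ k _) b']

theorem bigTwist_crossedMulHB (hlamassoc : lam ∘ₗ ((LinearMap.mul' k H).rTensor A)
      ∘ₗ (TensorProduct.assoc k H H A).symm.toLinearMap = lam ∘ₗ (lam.lTensor H))
    (p p' : H ⊗[k] B) (a : A) :
    bigTwist k H A B lam (crossedMulHB k H B rho (p ⊗ₜ p') ⊗ₜ a)
      = twistActLeft (crossedMulHB k H B rho) (bigTwist k H A B lam)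
          (p ⊗ₜ bigTwist k H A B lam (p' ⊗ₜ a)) := by
  induction p using TensorProduct.induction_on with
  | zero => simp
  | add x y hx hy => simp only [add_tmul, map_add, hx, hy]
  | tmul h b =>
    induction p' using TensorProduct.induction_on with
    | zero => simp
    | add x y hx hy => simp only [add_tmul, tmul_add, map_add, hx, hy]
    | tmul h' b' => exact bigTwist_crossedMulHB_tmul hlamassoc h b h' b' a

theorem bigTwist_tmul_mul (hlammul : lam ∘ₗ ((LinearMap.mul' k A).lTensor H)
      = (LinearMap.mul' k A) ∘ₗ (TensorProduct.map lam lam)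
        ∘ₗ (TensorProduct.tensorTensorTensorComm k H H A A).toLinearMap
        ∘ₗ ((Coalgebra.comul (R := k) (A := H)).rTensor (A ⊗[k] A)))
    (p : H ⊗[k] B) (a a' : A) :
    bigTwist k H A B lam (p ⊗ₜ (a * a'))
      = twistActRight (LinearMap.mul' k A) (bigTwist k H A B lam)
          (bigTwist k H A B lam (p ⊗ₜ a) ⊗ₜ a') := by
  induction p using TensorProduct.induction_on with
  | zero => simp
  | add x y hx hy => simp only [add_tmul, map_add, hx, hy]
  | tmul h b =>
    let r := ℛ k h
    let Φ : H ⊗[k] (H ⊗[k] H) →ₗ[k] A ⊗[k] (H ⊗[k] B) :=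
      TensorProduct.map
          (LinearMap.mul' k A ∘ₗ TensorProduct.map ((curry lam).flip a) ((curry lam).flip a'))
          ((TensorProduct.mk k H B).flip b)
        ∘ₗ (TensorProduct.assoc k H H H).symm.toLinearMap
    calc bigTwist k H A B lam ((h ⊗ₜ b) ⊗ₜ (a * a'))
        = ∑ i ∈ r.index, ∑ j ∈ (ℛ k (r.left i)).index,
            Φ ((ℛ k (r.left i)).left j ⊗ₜ ((ℛ k (r.left i)).right j ⊗ₜ r.right i)) := by
          simp [Φ, bigTwist_tmul_eq_sum r, lam_tmul_mul hlammul (ℛ k _), sum_tmul]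
      _ = ∑ i ∈ r.index, ∑ j ∈ (ℛ k (r.right i)).index,
            Φ (r.left i ⊗ₜ ((ℛ k (r.right i)).left j ⊗ₜ (ℛ k (r.right i)).right j)) :=
          sum_sum_apply_tmul_tmul_eq r _ _ Φ
      _ = _ := by
          simp [Φ, bigTwist_tmul_eq_sum r, sum_tmul, twistActRight_tmul,
            bigTwist_tmul_eq_sum (ℛ k _)]

theorem bigTwist_one_tmul (hlam1 : ∀ a : A, lam ((1 : H) ⊗ₜ[k] a) = a) (a : A) :
    bigTwist k H A B lam ((1 ⊗ₜ 1) ⊗ₜ a) = a ⊗ₜ (1 ⊗ₜ 1) := by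
  simp [bigTwist, leftTwist, Bialgebra.comul_one, Algebra.TensorProduct.one_def, hlam1]

theorem bigTwist_tmul_one
    (hlamone : ∀ h : H, lam (h ⊗ₜ[k] (1 : A)) = (Coalgebra.counit (R := k) (A := H) h) • (1 : A))
    (p : H ⊗[k] B) : bigTwist k H A B lam (p ⊗ₜ 1) = 1 ⊗ₜ p := by
  induction p using TensorProduct.induction_on with
  | zero => simp
  | add x y hx hy => simp only [add_tmul, tmul_add, map_add, hx, hy]
  | tmul h b =>
    conv_rhs => rw [← sum_counit_smul (ℛ k h)]
    simp [bigTwist_tmul_eq_sum (ℛ k h), hlamone, sum_tmul, tmul_sum, smul_tmul]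

end CrossedProduct

/-- If `A` is a left `H`-module algebra and `B` a right `H`-module algebra over a bialgebra
`H`, then the two-sided crossed product `A # H # B` is a unital associative algebra. -/
theorem two_sided_crossed_product_assoc_unital
    (lam : H ⊗[k] A →ₗ[k] A) (rho : B ⊗[k] H →ₗ[k] B)
    (hlam1 : ∀ a : A, lam ((1 : H) ⊗ₜ[k] a) = a)
    (hlamassoc : lam ∘ₗ ((LinearMap.mul' k H).rTensor A)
        ∘ₗ (TensorProduct.assoc k H H A).symm.toLinearMap
      = lam ∘ₗ (lam.lTensor H))
    (hlammul : lam ∘ₗ ((LinearMap.mul' k A).lTensor H)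
      = (LinearMap.mul' k A)
        ∘ₗ (TensorProduct.map lam lam)
        ∘ₗ (TensorProduct.tensorTensorTensorComm k H H A A).toLinearMap
        ∘ₗ ((Coalgebra.comul (R := k) (A := H)).rTensor (A ⊗[k] A)))
    (hlamone : ∀ h : H, lam (h ⊗ₜ[k] (1 : A))
      = (Coalgebra.counit (R := k) (A := H) h) • (1 : A))
    (hrho1 : ∀ b : B, rho (b ⊗ₜ[k] (1 : H)) = b)
    (hrhoassoc : rho ∘ₗ (rho.rTensor H)
        ∘ₗ (TensorProduct.assoc k B H H).symm.toLinearMap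
      = rho ∘ₗ ((LinearMap.mul' k H).lTensor B))
    (hrhomul : rho ∘ₗ ((LinearMap.mul' k B).rTensor H)
      = (LinearMap.mul' k B)
        ∘ₗ (TensorProduct.map rho rho)
        ∘ₗ (TensorProduct.tensorTensorTensorComm k B B H H).toLinearMap
        ∘ₗ ((Coalgebra.comul (R := k) (A := H)).lTensor (B ⊗[k] B)))
    (hrhoone : ∀ h : H, rho ((1 : B) ⊗ₜ[k] h)
      = (Coalgebra.counit (R := k) (A := H) h) • (1 : B)) :
    (twoSidedCrossedMul k H A B lam rho
        ∘ₗ (twoSidedCrossedMul k H A B lam rho).rTensor (A ⊗[k] (H ⊗[k] B))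
      = twoSidedCrossedMul k H A B lam rho
        ∘ₗ (twoSidedCrossedMul k H A B lam rho).lTensor (A ⊗[k] (H ⊗[k] B))
        ∘ₗ (TensorProduct.assoc k (A ⊗[k] (H ⊗[k] B)) (A ⊗[k] (H ⊗[k] B))
              (A ⊗[k] (H ⊗[k] B))).toLinearMap)
    ∧ (∀ z : A ⊗[k] (H ⊗[k] B),
        twoSidedCrossedMul k H A B lam rho
          (((1 : A) ⊗ₜ[k] ((1 : H) ⊗ₜ[k] (1 : B))) ⊗ₜ[k] z) = z)
    ∧ (∀ z : A ⊗[k] (H ⊗[k] B),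
        twoSidedCrossedMul k H A B lam rho
          (z ⊗ₜ[k] ((1 : A) ⊗ₜ[k] ((1 : H) ⊗ₜ[k] (1 : B)))) = z) := by
  have hHB_assoc : ∀ x y z, crossedMulHB k H B rho (crossedMulHB k H B rho (x ⊗ₜ y) ⊗ₜ z)
      = crossedMulHB k H B rho (x ⊗ₜ crossedMulHB k H B rho (y ⊗ₜ z)) :=
    twistMul_assoc LinearMap.mul'_assoc_tmul LinearMap.mul'_assoc_tmul
      (fun b b' h => by rw [LinearMap.mul'_apply]; exact rightTwist_mul_tmul hrhomul b b' h)
      (fun b h h' => by rw [LinearMap.mul'_apply]; exact rightTwist_tmul_mul hrhoassoc b h h')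
  have hassoc := twistMul_assoc LinearMap.mul'_assoc_tmul hHB_assoc
    (bigTwist_crossedMulHB hlamassoc)
    (fun p a a' => by rw [LinearMap.mul'_apply]; exact bigTwist_tmul_mul hlammul p a a')
  refine ⟨TensorProduct.ext_threefold fun x y z => by
    simpa [twoSidedCrossedMul] using hassoc x y z, ?_, ?_⟩
  · exact twistMul_one_tmul (by simp) (twistMul_one_tmul (by simp) (by simp)
      (rightTwist_one_tmul hrhoone)) (bigTwist_one_tmul hlam1)
  · exact twistMul_tmul_one (by simp) (twistMul_tmul_one (by simp) (by simp)
      (rightTwist_tmul_one hrho1)) (bigTwist_tmul_one hlamone)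
end
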